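/- arXiv:2007.06519 — 2 statements merged into one kernel-verified Lean document; each statement's English description precedes it below -/
import Mathlib

section
/- Let V be a finite-dimensional real inner-product-like space with a symmetric bilinear form ⟨·,·⟩, and let C_1,…,C_n be vectors with ⟨C_i,C_j⟩ ≥ 0 for all i ≠ j. Suppose D = F + E = A + B where E is a nonnegative combination of the C_i, B is a nonzero nonnegative combination of the C_i whose Gram matrix restricted to the support of B is negative definite, ⟨F, C_i⟩ ≥ 0 for every C_i in the support of B, and ⟨A, C_i⟩ ≤ 0 for every C_i in the support of B. Then B ≤ E coefficientwise (each coefficient of C_i in B is at most the corresponding coefficient in E). -/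
/-!
Put `y = (b - e)⁺` and `z = (b - e)⁻`, so that `∑ yᵢ Cᵢ - ∑ zᵢ Cᵢ = F - A` and `y` is supported
on the support of `b`. Pairing `S = ∑ yᵢ Cᵢ` with itself gives
`S² = (∑ zᵢ Cᵢ)·S + F·S - A·S ≥ 0`: the first term is nonnegative because `y` and `z` have
disjoint supports and distinct `Cᵢ` meet nonnegatively, the other two by the hypotheses on `F`
and `A`. Negative definiteness on the support of `b` forces `y = 0`, that is `b ≤ e`.
-/

open Finset

lemma posPart_mul_negPart_eq_zero {R : Type*} [CommRing R] [LinearOrder R] [IsStrictOrderedRing R]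
    (a : R) : a⁺ * a⁻ = 0 := by
  rcases le_total a 0 with ha | ha
  · rw [posPart_eq_zero.mpr ha, zero_mul]
  · rw [negPart_eq_zero.mpr ha, mul_zero]

namespace LinearMap

variable {R M ι : Type*} [CommRing R] [AddCommGroup M] [Module R M] [Fintype ι]
  (f : M →ₗ[R] M →ₗ[R] R) (C : ι → M)

lemma sum_smul_apply (x : ι → R) (v : M) : f (∑ i, x i • C i) v = ∑ i, x i * f (C i) v := by
  simp only [map_sum, map_smul, LinearMap.sum_apply, LinearMap.smul_apply, smul_eq_mul]

lemma apply_sum_smul (v : M) (x : ι → R) : f v (∑ i, x i • C i) = ∑ i, x i * f v (C i) := by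
  simp only [map_sum, map_smul, smul_eq_mul]

variable [LinearOrder R] [IsStrictOrderedRing R] {f C}

lemma apply_sum_smul_nonneg {v : M} {x : ι → R} (hx : ∀ i, 0 ≤ x i)
    (hv : ∀ i, x i ≠ 0 → 0 ≤ f v (C i)) : 0 ≤ f v (∑ i, x i • C i) := by
  rw [apply_sum_smul]
  refine sum_nonneg fun i _ => ?_
  rcases eq_or_ne (x i) 0 with hxi | hxi
  · simp [hxi]
  · exact mul_nonneg (hx i) (hv i hxi)

lemma apply_sum_smul_nonpos {v : M} {x : ι → R} (hx : ∀ i, 0 ≤ x i)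
    (hv : ∀ i, x i ≠ 0 → f v (C i) ≤ 0) : f v (∑ i, x i • C i) ≤ 0 := by
  rw [apply_sum_smul]
  refine sum_nonpos fun i _ => ?_
  rcases eq_or_ne (x i) 0 with hxi | hxi
  · simp [hxi]
  · exact mul_nonpos_of_nonneg_of_nonpos (hx i) (hv i hxi)

lemma sum_smul_apply_sum_smul_nonneg (hC : Pairwise fun i j => 0 ≤ f (C i) (C j))
    {x y : ι → R} (hx : ∀ i, 0 ≤ x i) (hy : ∀ i, 0 ≤ y i) (hxy : ∀ i, x i * y i = 0) :
    0 ≤ f (∑ i, x i • C i) (∑ j, y j • C j) := by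
  rw [sum_smul_apply]
  refine sum_nonneg fun i _ => ?_
  rw [apply_sum_smul, mul_sum]
  refine sum_nonneg fun j _ => ?_
  rcases eq_or_ne i j with rfl | hij
  · simp [← mul_assoc, hxy]
  · exact mul_nonneg (hx i) (mul_nonneg (hy j) (hC hij))

lemma sum_smul_self_apply_nonneg_of_sum_smul_sub_sum_smul_eq
    (hC : Pairwise fun i j => 0 ≤ f (C i) (C j))
    {y z : ι → R} (hy : ∀ i, 0 ≤ y i) (hz : ∀ i, 0 ≤ z i) (hyz : ∀ i, y i * z i = 0)
    {F A : M} (heq : ∑ i, y i • C i - ∑ i, z i • C i = F - A)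
    (hF : ∀ i, y i ≠ 0 → 0 ≤ f F (C i)) (hA : ∀ i, y i ≠ 0 → f A (C i) ≤ 0) :
    0 ≤ f (∑ i, y i • C i) (∑ i, y i • C i) := by
  have hS : ∑ i, y i • C i = ∑ i, z i • C i + (F - A) := eq_add_of_sub_eq' heq
  have hzy : 0 ≤ f (∑ i, z i • C i) (∑ i, y i • C i) :=
    sum_smul_apply_sum_smul_nonneg hC hz hy fun i => by rw [mul_comm, hyz]
  have hFS : 0 ≤ f F (∑ i, y i • C i) := apply_sum_smul_nonneg hy hF
  have hAS : f A (∑ i, y i • C i) ≤ 0 := apply_sum_smul_nonpos hy hA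
  nth_rewrite 1 [hS]
  rw [map_add, map_sub, LinearMap.add_apply, LinearMap.sub_apply]
  linarith

end LinearMap

theorem integral_zariski_comparison_general
    {V : Type*} [AddCommGroup V] [Module ℝ V]
    (f : V →ₗ[ℝ] V →ₗ[ℝ] ℝ)
    {n : ℕ} (C : Fin n → V)
    (hC : ∀ i j, i ≠ j → 0 ≤ f (C i) (C j))
    (D F A : V) (e b : Fin n → ℝ)
    (he : ∀ i, 0 ≤ e i)
    (hDFE : D = F + ∑ i, e i • C i)
    (hDAB : D = A + ∑ i, b i • C i)
    (hnegdef : ∀ x : Fin n → ℝ, x ≠ 0 → (∀ i, b i = 0 → x i = 0) →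
      f (∑ i, x i • C i) (∑ i, x i • C i) < 0)
    (hF : ∀ i, b i ≠ 0 → 0 ≤ f F (C i))
    (hA : ∀ i, b i ≠ 0 → f A (C i) ≤ 0) :
    ∀ i, b i ≤ e i := by
  set y := (b - e)⁺
  have hy_supp : ∀ i, b i = 0 → y i = 0 := fun i hbi =>
    posPart_eq_zero.mpr (by simpa [hbi] using he i)
  have hy_supp' : ∀ i, y i ≠ 0 → b i ≠ 0 := fun i => mt (hy_supp i)
  have heq : ∑ i, y i • C i - ∑ i, (b - e)⁻ i • C i = F - A := by
    have hcoef : ∀ i, y i - (b - e)⁻ i = b i - e i := fun i => posPart_sub_negPart (b i - e i)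
    rw [← sum_sub_distrib]
    simp_rw [← sub_smul, hcoef, sub_smul]
    rw [sum_sub_distrib, sub_eq_sub_iff_add_eq_add, add_comm, ← hDAB, ← hDFE]
  have hSS := LinearMap.sum_smul_self_apply_nonneg_of_sum_smul_sub_sum_smul_eq hC
    (fun i => posPart_nonneg (b i - e i)) (fun i => negPart_nonneg (b i - e i))
    (fun i => posPart_mul_negPart_eq_zero (b i - e i)) heq
    (fun i hi => hF i (hy_supp' i hi)) (fun i hi => hA i (hy_supp' i hi))
  have hy : y = 0 := by
    by_contra hy
    exact (hnegdef y hy hy_supp).not_ge hSS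
  intro i
  exact sub_nonpos.mp (posPart_eq_zero.mp hy i)

/-- **Comparison lemma for Zariski decompositions** (Enokizono, Lemma 3.4),
stated for a symmetric bilinear form on a finite-dimensional real vector space.
If `D = F + E = A + B`, `E` is a nonnegative combination of the `C i`,
`B` is a nonzero nonnegative combination whose Gram matrix on its support is
negative definite, `F` pairs nonnegatively and `A` nonpositively with every
`C i` in the support of `B`, then `B ≤ E` coefficientwise. -/
theorem integral_zariski_comparison
    {V : Type*} [AddCommGroup V] [Module ℝ V] [FiniteDimensional ℝ V]
    (f : V →ₗ[ℝ] V →ₗ[ℝ] ℝ) (hsymm : ∀ v w : V, f v w = f w v)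
    {n : ℕ} (C : Fin n → V)
    (hC : ∀ i j, i ≠ j → 0 ≤ f (C i) (C j))
    (D F A : V) (e b : Fin n → ℝ)
    (he : ∀ i, 0 ≤ e i) (hb : ∀ i, 0 ≤ b i) (hbne : b ≠ 0)
    (hDFE : D = F + ∑ i, e i • C i)
    (hDAB : D = A + ∑ i, b i • C i)
    (hnegdef : ∀ x : Fin n → ℝ, x ≠ 0 → (∀ i, b i = 0 → x i = 0) →
      f (∑ i, x i • C i) (∑ i, x i • C i) < 0)
    (hF : ∀ i, b i ≠ 0 → 0 ≤ f F (C i))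
    (hA : ∀ i, b i ≠ 0 → f A (C i) ≤ 0) :
    ∀ i, b i ≤ e i :=
  integral_zariski_comparison_general f C hC D F A e b he hDFE hDAB hnegdef hF hA
end

section
/- Let X be a normal complete surface (algebraic over a field, with Mumford intersection theory) such that the cone of numerically ample classes is nonempty, and let D be a nef and big ℝ-divisor and B an effective divisor with 0 < (D−B)·B and D−2B big. If B² > 0, then B² < (D−B)² and B²·(D−B)² ≤ ((D−B)·B)² by the Hodge index theorem; consequently, if (D−B)·B ≤ δ/4 for some δ > 0, then D² ≤ δ²/(16B²) + δ/2 + B². -/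
/-!
Write `x = D - B`, so that `D = x + B` and `D - 2B = x - B`. Then
`D · (D - 2B) = x² - B²`, which is positive because `D` is nef and big and `D - 2B` is big;
this is the first inequality. The second is the Hodge index inequality for `B` (with `B² > 0`)
and `x`. Finally `D² = x² + 2 x·B + B²`, and the Hodge index inequality bounds
`x² ≤ (x·B)² / B² ≤ (δ/4)² / B²`.
-/

namespace LinearMap.BilinForm

variable {R M : Type*} [CommRing R] [AddCommGroup M] [Module R M]
  {f : M →ₗ[R] M →ₗ[R] R}

theorem apply_add_add_of_symm (hf : ∀ x y, f x y = f y x) (x y : M) :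
    f (x + y) (x + y) = f x x + 2 * f x y + f y y := by
  simp only [map_add, LinearMap.add_apply, hf y x]
  ring

theorem apply_add_sub_of_symm (hf : ∀ x y, f x y = f y x) (x y : M) :
    f (x + y) (x - y) = f x x - f y y := by
  simp only [map_add, map_sub, LinearMap.add_apply, hf y x]
  ring

end LinearMap.BilinForm

theorem add_two_mul_add_le_of_mul_le_sq {c p q δ : ℝ} (hc : 0 < c) (hq : c * q ≤ p ^ 2)
    (hp : 0 ≤ p) (hpδ : p ≤ δ / 4) :
    q + 2 * p + c ≤ δ ^ 2 / (16 * c) + δ / 2 + c := by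
  have hq' : q ≤ (δ / 4) ^ 2 / c := by
    rw [le_div_iff₀ hc, mul_comm]
    exact hq.trans (pow_le_pow_left₀ hp hpδ 2)
  have h16 : (δ / 4) ^ 2 / c = δ ^ 2 / (16 * c) := by
    field_simp
    ring
  linarith

theorem hodge_index_reider_estimate_general
    {V : Type*} [AddCommGroup V] [Module ℝ V]
    (inter : V →ₗ[ℝ] V →ₗ[ℝ] ℝ)
    (hsymm : ∀ x y : V, inter x y = inter y x)
    (Nef Big : V → Prop)
    (hodge : ∀ x y : V, 0 < inter x x →
      inter x x * inter y y ≤ (inter x y) ^ 2)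
    (nef_big_pos : ∀ x y : V, Nef x → Big x → Big y → 0 < inter x y)
    (D B : V) (hDnef : Nef D) (hDbig : Big D)
    (hDB : 0 < inter (D - B) B) (h2B : Big (D - (2 : ℝ) • B))
    (hB2 : 0 < inter B B) :
    inter B B < inter (D - B) (D - B) ∧
    inter B B * inter (D - B) (D - B) ≤ (inter (D - B) B) ^ 2 ∧
    ∀ δ : ℝ, 0 < δ → inter (D - B) B ≤ δ / 4 →
      inter D D ≤ δ ^ 2 / (16 * inter B B) + δ / 2 + inter B B := by
  set x := D - B
  have hD : D = x + B := (sub_add_cancel D B).symm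
  have h2B_eq : D - (2 : ℝ) • B = x - B := by rw [two_smul, sub_add_eq_sub_sub]
  have hpos : 0 < inter x x - inter B B := by
    have := nef_big_pos D _ hDnef hDbig h2B
    rwa [h2B_eq, hD, LinearMap.BilinForm.apply_add_sub_of_symm hsymm] at this
  have hHodge : inter B B * inter x x ≤ (inter x B) ^ 2 := by
    rw [hsymm x B]
    exact hodge B x hB2
  refine ⟨by linarith, hHodge, fun δ _ hδ => ?_⟩
  rw [hD, LinearMap.BilinForm.apply_add_add_of_symm hsymm]
  exact add_two_mul_add_le_of_mul_le_sq hB2 hHodge hDB.le hδ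

/-- **Hodge-index computation in Reider-type theorem II** (Enokizono,
Theorem 5.3): in the numerical class space of a normal complete surface with
nonempty ample cone (so the intersection form has signature `(1, ρ-1)` and
satisfies the Hodge index inequality, and a nef-and-big class pairs
positively with any big class), let `D` be a nef and big ℝ-divisor and `B`
an effective divisor with `0 < (D-B)·B` and `D - 2B` big.  If `B² > 0`, then
`B² < (D-B)²` and `B²·(D-B)² ≤ ((D-B)·B)²`; consequently, if
`(D-B)·B ≤ δ/4` for some `δ > 0`, then `D² ≤ δ²/(16 B²) + δ/2 + B²`. -/
theorem hodge_index_reider_estimate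
    {V : Type*} [AddCommGroup V] [Module ℝ V]
    (inter : V →ₗ[ℝ] V →ₗ[ℝ] ℝ)
    (hsymm : ∀ x y : V, inter x y = inter y x)
    (Nef Big Eff : V → Prop)
    (hodge : ∀ x y : V, 0 < inter x x →
      inter x x * inter y y ≤ (inter x y) ^ 2)
    (nef_big_pos : ∀ x y : V, Nef x → Big x → Big y → 0 < inter x y)
    (D B : V) (hDnef : Nef D) (hDbig : Big D) (hBeff : Eff B)
    (hDB : 0 < inter (D - B) B) (h2B : Big (D - (2 : ℝ) • B))
    (hB2 : 0 < inter B B) :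
    inter B B < inter (D - B) (D - B) ∧
    inter B B * inter (D - B) (D - B) ≤ (inter (D - B) B) ^ 2 ∧
    ∀ δ : ℝ, 0 < δ → inter (D - B) B ≤ δ / 4 →
      inter D D ≤ δ ^ 2 / (16 * inter B B) + δ / 2 + inter B B :=
  hodge_index_reider_estimate_general inter hsymm Nef Big hodge nef_big_pos D B hDnef hDbig hDB h2B
    hB2
end
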